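/- Let G be finite, C_t and C_{t+1} two positive conductance configurations on the edges of G_(n), R_t = 1/C_t, R_{t+1} = 1/C_{t+1}. For any x ∈ V_(n−1)∖{a}: v_{n,t}(x) − v_{n,t+1}(x) = (1/𝓡_{n,t}) Σ_{e={y,z}∈E_(n)} (R_t(e) − R_{t+1}(e)) · i₁(y,z) · i₀(y,z), where i₁ is the unit current in (G_(n), C_{t+1}) from source x to sink {a} ∪ ∂V_(n), i₀ is the unit current in (G_(n), C_t) from source a to sink ∂V_(n), and 𝓡_{n,t} is the effective resistance between a and ∂V_(n) in (G_(n), C_t). -/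

import Mathlib

noncomputable section

variable {V : Type*} [Fintype V]

/-- A unit flow from `src` to the sink set `snk` on a finite graph. -/
def IsUnitFlowF (G : SimpleGraph V) (src : V) (snk : Set V) (j : V → V → ℝ) : Prop :=
  (∀ x y, j x y = -j y x) ∧
  (∀ x y, ¬G.Adj x y → j x y = 0) ∧
  (∀ x, x ≠ src → x ∉ snk → ∑ y, j x y = 0) ∧
  (∑ y, j src y = 1)

/-- The energy `∑_e j(e)² R(e)` of a flow (edges counted once, whence the `1/2`). -/
def energyF (R : V → V → ℝ) (j : V → V → ℝ) : ℝ :=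
  (1 / 2) * ∑ x, ∑ y, (j x y) ^ 2 * R x y

/-- The unit current: the unit flow minimizing the energy (Thompson's principle). -/
def IsUnitCurrent (G : SimpleGraph V) (src : V) (snk : Set V)
    (R : V → V → ℝ) (i : V → V → ℝ) : Prop :=
  IsUnitFlowF G src snk i ∧
  ∀ j, IsUnitFlowF G src snk j → energyF R i ≤ energyF R j

lemma sum2_add (f g : V → V → ℝ) :
    ∑ y, ∑ z, (f y z + g y z) = (∑ y, ∑ z, f y z) + ∑ y, ∑ z, g y z := by
  rw [← Finset.sum_add_distrib]
  exact Finset.sum_congr rfl fun y _ => Finset.sum_add_distrib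

lemma sum2_smul (c : ℝ) (f : V → V → ℝ) :
    ∑ y, ∑ z, c * f y z = c * ∑ y, ∑ z, f y z := by
  simp [Finset.mul_sum]

lemma pairing (j : V → V → ℝ) (hj : ∀ y z, j y z = -j z y) (g : V → ℝ) :
    ∑ y, ∑ z, (g y - g z) * j y z = 2 * ∑ y, g y * ∑ z, j y z := by
  have hz : ∀ z, ∑ y, j y z = -∑ y, j z y := fun z => by
    rw [← Finset.sum_neg_distrib]
    exact Finset.sum_congr rfl fun y _ => hj y z
  have h1 : ∑ y, ∑ z, (g y - g z) * j y z
      = (∑ y, ∑ z, g y * j y z) - ∑ y, ∑ z, g z * j y z := by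
    rw [← Finset.sum_sub_distrib]
    refine Finset.sum_congr rfl fun y _ => ?_
    rw [← Finset.sum_sub_distrib]
    exact Finset.sum_congr rfl fun z _ => by ring
  have h2 : ∑ y, ∑ z, g z * j y z = - ∑ y, g y * ∑ z, j y z := by
    rw [Finset.sum_comm]
    calc ∑ z, ∑ y, g z * j y z = ∑ z, g z * ∑ y, j y z := by
          simp [Finset.mul_sum]
      _ = ∑ z, -(g z * ∑ y, j z y) := by
          refine Finset.sum_congr rfl fun z _ => ?_
          rw [hz z]; ring
      _ = - ∑ z, g z * ∑ y, j z y := Finset.sum_neg_distrib _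
  have h3 : ∑ y, ∑ z, g y * j y z = ∑ y, g y * ∑ z, j y z := by
    simp [Finset.mul_sum]
  rw [h1, h2, h3]; ring

lemma div_harm (G : SimpleGraph V) [DecidableRel G.Adj] (C : V → V → ℝ) (v : V → ℝ)
    (y : V) (hpos : ∀ z, G.Adj y z → 0 < C y z)
    (hh : v y = ∑ z ∈ G.neighborFinset y, (C y z / ∑ w ∈ G.neighborFinset y, C y w) * v z) :
    ∑ z, (if G.Adj y z then C y z * (v y - v z) else 0) = 0 := by
  classical
  have hfilter : ∑ z, (if G.Adj y z then C y z * (v y - v z) else 0)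
      = ∑ z ∈ G.neighborFinset y, C y z * (v y - v z) := by
    rw [SimpleGraph.neighborFinset_eq_filter, Finset.sum_filter]
  rw [hfilter]
  rcases Finset.eq_empty_or_nonempty (G.neighborFinset y) with hN | hN
  · simp [hN]
  · set N := G.neighborFinset y with hNdef
    have hS : 0 < ∑ w ∈ N, C y w :=
      Finset.sum_pos (fun z hz => hpos z ((G.mem_neighborFinset y z).mp hz)) hN
    have hvy : v y * (∑ w ∈ N, C y w) = ∑ z ∈ N, C y z * v z := by
      have : v y = (∑ z ∈ N, C y z * v z) / (∑ w ∈ N, C y w) := by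
        rw [hh, Finset.sum_div]
        exact Finset.sum_congr rfl fun z _ => by rw [div_mul_eq_mul_div]
      rw [this, div_mul_cancel₀ _ hS.ne']
    calc ∑ z ∈ N, C y z * (v y - v z)
        = (∑ z ∈ N, C y z * v y) - ∑ z ∈ N, C y z * v z := by
          rw [← Finset.sum_sub_distrib]
          exact Finset.sum_congr rfl fun z _ => by ring
      _ = v y * (∑ w ∈ N, C y w) - ∑ z ∈ N, C y z * v z := by
          rw [Finset.mul_sum]
          congr 1
          exact Finset.sum_congr rfl fun z _ => by ring
      _ = 0 := by rw [hvy]; ring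

lemma energy_expand (R i δ : V → V → ℝ) (t : ℝ) :
    energyF R (fun y z => i y z + t * δ y z) =
      energyF R i + t * (∑ y, ∑ z, R y z * i y z * δ y z) + t ^ 2 * energyF R δ := by
  have hsum : ∑ y, ∑ z, (i y z + t * δ y z) ^ 2 * R y z
      = (∑ y, ∑ z, i y z ^ 2 * R y z)
        + ((2 * t) * (∑ y, ∑ z, R y z * i y z * δ y z)
          + t ^ 2 * (∑ y, ∑ z, δ y z ^ 2 * R y z)) := by
    rw [← sum2_smul, ← sum2_smul, ← sum2_add, ← sum2_add]
    exact Finset.sum_congr rfl fun y _ => Finset.sum_congr rfl fun z _ => by ring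
  unfold energyF
  rw [hsum]; ring

lemma stationary (G : SimpleGraph V) [DecidableRel G.Adj] (src : V) (snk : Set V)
    (R i δ : V → V → ℝ) (hcur : IsUnitCurrent G src snk R i)
    (hδsym : ∀ y z, δ y z = -δ z y)
    (hδsupp : ∀ y z, ¬G.Adj y z → δ y z = 0)
    (hδcons : ∀ y, y ≠ src → y ∉ snk → ∑ z, δ y z = 0)
    (hδsrc : ∑ z, δ src z = 0)
    (hR : ∀ y z, G.Adj y z → 0 ≤ R y z) :
    ∑ y, ∑ z, R y z * i y z * δ y z = 0 := by
  classical
  obtain ⟨⟨hisym, hisupp, hicons, hisrc⟩, hmin⟩ := hcur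
  set L := ∑ y, ∑ z, R y z * i y z * δ y z with hL
  set Q := energyF R δ with hQdef
  have hQ : 0 ≤ Q := by
    rw [hQdef]
    unfold energyF
    have : ∀ y z : V, 0 ≤ δ y z ^ 2 * R y z := by
      intro y z
      by_cases h : G.Adj y z
      · exact mul_nonneg (sq_nonneg _) (hR y z h)
      · simp [hδsupp y z h]
    refine mul_nonneg (by norm_num) (Finset.sum_nonneg fun y _ => Finset.sum_nonneg fun z _ => this y z)
  have key : ∀ t : ℝ, 0 ≤ t * L + t ^ 2 * Q := by
    intro t
    have hflow : IsUnitFlowF G src snk (fun y z => i y z + t * δ y z) := by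
      refine ⟨fun y z => ?_, fun y z h => ?_, fun y hy hy' => ?_, ?_⟩
      · show i y z + t * δ y z = -(i z y + t * δ z y)
        rw [hisym y z, hδsym y z]; ring
      · show i y z + t * δ y z = 0
        rw [hisupp y z h, hδsupp y z h]; ring
      · show ∑ z, (i y z + t * δ y z) = 0
        rw [Finset.sum_add_distrib, hicons y hy hy', ← Finset.mul_sum, hδcons y hy hy']; ring
      · show ∑ z, (i src z + t * δ src z) = 1
        rw [Finset.sum_add_distrib, hisrc, ← Finset.mul_sum, hδsrc]; ring
    have h1 := hmin _ hflow
    rw [energy_expand R i δ t] at h1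
    linarith
  have h1 := key (-(L / (Q + 1)))
  have hQ1 : (0 : ℝ) < Q + 1 := by linarith
  have h2 : -(L / (Q + 1)) * L + (-(L / (Q + 1))) ^ 2 * Q = -(L ^ 2 / (Q + 1) ^ 2) := by
    field_simp
    ring
  rw [h2] at h1
  have h3 : 0 ≤ L ^ 2 / (Q + 1) ^ 2 := div_nonneg (sq_nonneg _) (sq_nonneg _)
  have h4 : L ^ 2 / (Q + 1) ^ 2 = 0 := le_antisymm (by linarith) h3
  have h5 : L ^ 2 = 0 := by
    rcases div_eq_zero_iff.mp h4 with h | h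
    · exact h
    · exact absurd h (pow_ne_zero _ hQ1.ne')
  exact pow_eq_zero_iff (n := 2) (by norm_num) |>.mp h5

/-- on the finite network `G_(n)` (here: a finite connected graph `G`
with origin `a` and boundary set `B` playing `∂V_(n)`), for conductances `Ct`, `Ct1`
with voltages `vt`, `vt1` (probability of hitting `a` before `B`, characterized by
harmonicity and boundary values), one has
`v_{n,t}(x) - v_{n,t+1}(x) = (1/𝓡_{n,t}) ∑_e (R_t(e) - R_{t+1}(e)) i₁(e) i₀(e)`,
where `i₁` is the unit current in `(G_(n), C_{t+1})` from `x` to `{a} ∪ B`, `i₀` the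
unit current in `(G_(n), C_t)` from `a` to `B`, and `𝓡_{n,t}` the effective
resistance between `a` and `B` in `(G_(n), C_t)` (the energy of `i₀`). -/
theorem stmt10 [DecidableEq V] (G : SimpleGraph V) [DecidableRel G.Adj]
    (hconn : G.Connected)
    (a : V) (B : Set V) (hB : B.Nonempty) (haB : a ∉ B)
    (Ct Ct1 : V → V → ℝ)
    (hsymt : ∀ x y, Ct x y = Ct y x) (hsymt1 : ∀ x y, Ct1 x y = Ct1 y x)
    (hpost : ∀ x y, G.Adj x y → 0 < Ct x y)
    (hpost1 : ∀ x y, G.Adj x y → 0 < Ct1 x y)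
    (vt vt1 : V → ℝ)
    (hvta : vt a = 1) (hvtB : ∀ x ∈ B, vt x = 0)
    (hvt1a : vt1 a = 1) (hvt1B : ∀ x ∈ B, vt1 x = 0)
    (hharmt : ∀ x, x ≠ a → x ∉ B →
      vt x = ∑ y ∈ G.neighborFinset x,
        (Ct x y / ∑ z ∈ G.neighborFinset x, Ct x z) * vt y)
    (hharmt1 : ∀ x, x ≠ a → x ∉ B →
      vt1 x = ∑ y ∈ G.neighborFinset x,
        (Ct1 x y / ∑ z ∈ G.neighborFinset x, Ct1 x z) * vt1 y)
    (x : V) (hxa : x ≠ a) (hxB : x ∉ B)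
    (i0 i1 : V → V → ℝ)
    (hi0 : IsUnitCurrent G a B (fun y z => 1 / Ct y z) i0)
    (hi1 : IsUnitCurrent G x ({a} ∪ B) (fun y z => 1 / Ct1 y z) i1) :
    vt x - vt1 x =
      (1 / energyF (fun y z => 1 / Ct y z) i0) *
        ((1 / 2) * ∑ y, ∑ z,
          (1 / Ct y z - 1 / Ct1 y z) * i1 y z * i0 y z) := by
  classical
  obtain ⟨⟨hi0sym, hi0supp, hi0cons, hi0src⟩, hi0min⟩ := id hi0
  obtain ⟨⟨hi1sym, hi1supp, hi1cons, hi1src⟩, hi1min⟩ := id hi1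
  -- the currents induced by the voltages
  set k0 : V → V → ℝ := fun y z => if G.Adj y z then Ct y z * (vt y - vt z) else 0 with hk0def
  set k1 : V → V → ℝ := fun y z => if G.Adj y z then Ct1 y z * (vt1 y - vt1 z) else 0 with hk1def
  have hk0adj : ∀ y z, G.Adj y z → k0 y z = Ct y z * (vt y - vt z) := by
    intro y z h; simp only [hk0def]; rw [if_pos h]
  have hk0n : ∀ y z, ¬G.Adj y z → k0 y z = 0 := by
    intro y z h; simp only [hk0def]; rw [if_neg h]
  have hk1adj : ∀ y z, G.Adj y z → k1 y z = Ct1 y z * (vt1 y - vt1 z) := by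
    intro y z h; simp only [hk1def]; rw [if_pos h]
  have hk1n : ∀ y z, ¬G.Adj y z → k1 y z = 0 := by
    intro y z h; simp only [hk1def]; rw [if_neg h]
  have hk0sym : ∀ y z, k0 y z = -k0 z y := by
    intro y z
    by_cases h : G.Adj y z
    · rw [hk0adj y z h, hk0adj z y h.symm, hsymt y z]; ring
    · rw [hk0n y z h, hk0n z y (fun h' => h h'.symm)]; ring
  have hk1sym : ∀ y z, k1 y z = -k1 z y := by
    intro y z
    by_cases h : G.Adj y z
    · rw [hk1adj y z h, hk1adj z y h.symm, hsymt1 y z]; ring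
    · rw [hk1n y z h, hk1n z y (fun h' => h h'.symm)]; ring
  have div0 : ∀ y, y ≠ a → y ∉ B → ∑ z, k0 y z = 0 := fun y hy hyB =>
    div_harm G Ct vt y (fun z hz => hpost y z hz) (hharmt y hy hyB)
  have div1 : ∀ y, y ≠ a → y ∉ B → ∑ z, k1 y z = 0 := fun y hy hyB =>
    div_harm G Ct1 vt1 y (fun z hz => hpost1 y z hz) (hharmt1 y hy hyB)
  -- reduction of divergence sums for i1
  have hd1sum : ∀ g : V → ℝ, (∀ b ∈ B, g b = 0) →
      ∑ y, g y * ∑ z, i1 y z = g x + g a * (∑ z, i1 a z) := by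
    intro g hg
    have hvanish : ∀ y ∈ Finset.univ, y ∉ ({x, a} : Finset V) → g y * ∑ z, i1 y z = 0 := by
      intro y _ hy
      simp only [Finset.mem_insert, Finset.mem_singleton] at hy
      push_neg at hy
      by_cases hyB : y ∈ B
      · rw [hg y hyB]; ring
      · rw [hi1cons y hy.1 (by
          simp only [Set.mem_union, Set.mem_singleton_iff]
          push_neg
          exact ⟨hy.2, hyB⟩)]
        ring
    rw [← Finset.sum_subset (Finset.subset_univ ({x, a} : Finset V)) hvanish,
      Finset.sum_pair hxa, hi1src]
    ring
  set d := ∑ z, i1 a z with hddef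
  -- Step A : the amount of i1 entering a is vt1 x
  have hstatA : ∑ y, ∑ z, (1 / Ct1 y z) * i1 y z * k1 y z = 0 := by
    refine stationary G x ({a} ∪ B) _ i1 k1 hi1 hk1sym hk1n (fun y hy hy' => ?_) ?_
      (fun y z h => (one_div_pos.mpr (hpost1 y z h)).le)
    · have hya : y ≠ a := fun h => hy' (by simp [h])
      have hyB : y ∉ B := fun h => hy' (Set.mem_union_right _ h)
      exact div1 y hya hyB
    · exact div1 x hxa hxB
  have hptA : ∀ y z, (1 / Ct1 y z) * i1 y z * k1 y z = (vt1 y - vt1 z) * i1 y z := by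
    intro y z
    by_cases h : G.Adj y z
    · rw [hk1adj y z h]
      have hne := (hpost1 y z h).ne'
      field_simp
    · rw [hi1supp y z h]; ring
  have hA : vt1 x + d = 0 := by
    have h1 : ∑ y, ∑ z, (vt1 y - vt1 z) * i1 y z = 0 := by
      rw [← hstatA]
      exact Finset.sum_congr rfl fun y _ => Finset.sum_congr rfl fun z _ => (hptA y z).symm
    rw [pairing i1 hi1sym vt1, hd1sum vt1 hvt1B, hvt1a] at h1
    linarith
  -- Step B : the cross term with respect to the new resistances vanishes
  have hstatB : ∑ y, ∑ z, (1 / Ct1 y z) * i1 y z * i0 y z = 0 := by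
    refine stationary G x ({a} ∪ B) _ i1 i0 hi1 hi0sym hi0supp (fun y hy hy' => ?_) ?_
      (fun y z h => (one_div_pos.mpr (hpost1 y z h)).le)
    · have hya : y ≠ a := fun h => hy' (by simp [h])
      have hyB : y ∉ B := fun h => hy' (Set.mem_union_right _ h)
      exact hi0cons y hya hyB
    · exact hi0cons x hxa hxB
  -- Step C : the strength I of the current induced by vt is positive
  set I := ∑ z, k0 a z with hIdef
  have h2I : ∑ y, ∑ z, (vt y - vt z) * k0 y z = 2 * I := by
    rw [pairing k0 hk0sym vt]
    congr 1
    rw [Finset.sum_eq_single a (fun y _ hy => ?_) (fun h => absurd (Finset.mem_univ a) h)]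
    · rw [hvta]; ring
    · by_cases hyB : y ∈ B
      · rw [hvtB y hyB]; ring
      · rw [div0 y hy hyB]; ring
  have hterm0 : ∀ y z, (vt y - vt z) * k0 y z
      = (if G.Adj y z then Ct y z * (vt y - vt z) ^ 2 else 0) := by
    intro y z
    by_cases h : G.Adj y z
    · rw [hk0adj y z h, if_pos h]; ring
    · rw [hk0n y z h, if_neg h]; ring
  have htermnn : ∀ y z, 0 ≤ (vt y - vt z) * k0 y z := by
    intro y z
    rw [hterm0 y z]
    by_cases h : G.Adj y z
    · rw [if_pos h]; exact mul_nonneg (hpost y z h).le (sq_nonneg _)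
    · rw [if_neg h]
  have hInonneg : 0 ≤ I := by
    have h0 : (0:ℝ) ≤ ∑ y, ∑ z, (vt y - vt z) * k0 y z :=
      Finset.sum_nonneg fun y _ => Finset.sum_nonneg fun z _ => htermnn y z
    rw [h2I] at h0
    linarith
  have hIne : I ≠ 0 := by
    intro hI0
    have hsum0 : ∑ y, ∑ z, (vt y - vt z) * k0 y z = 0 := by rw [h2I, hI0]; ring
    have houter := (Finset.sum_eq_zero_iff_of_nonneg (fun y _ =>
      Finset.sum_nonneg fun z _ => htermnn y z)).mp hsum0
    have hzero : ∀ y z, G.Adj y z → vt y = vt z := by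
      intro y z h
      have hinner := (Finset.sum_eq_zero_iff_of_nonneg (fun z _ => htermnn y z)).mp
        (houter y (Finset.mem_univ y)) z (Finset.mem_univ z)
      rw [hterm0 y z, if_pos h] at hinner
      have hCt := hpost y z h
      have hsq : (vt y - vt z) ^ 2 = 0 := by
        rcases mul_eq_zero.mp hinner with h' | h'
        · exact absurd h' hCt.ne'
        · exact h'
      have := pow_eq_zero_iff (n := 2) (by norm_num) |>.mp hsq
      linarith
    have hwalk : ∀ {y z : V} (_ : G.Walk y z), vt y = vt z := by
      intro y z w
      induction w with
      | nil => rfl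
      | cons h _ ih => exact (hzero _ _ h).trans ih
    obtain ⟨b, hb⟩ := hB
    obtain ⟨w⟩ := hconn.preconnected a b
    have h1 := hwalk w
    rw [hvta, hvtB b hb] at h1
    norm_num at h1
  have hIpos : 0 < I := lt_of_le_of_ne hInonneg (Ne.symm hIne)
  -- the unit flow j = (1/I) k0
  set j : V → V → ℝ := fun y z => (1 / I) * k0 y z with hjdef
  have hjeq : ∀ y z, j y z = (1 / I) * k0 y z := fun y z => by simp only [hjdef]
  have hjflow : IsUnitFlowF G a B j := by
    refine ⟨fun y z => ?_, fun y z h => ?_, fun y hy hyB => ?_, ?_⟩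
    · rw [hjeq y z, hjeq z y, hk0sym y z]; ring
    · rw [hjeq y z, hk0n y z h]; ring
    · calc ∑ z, j y z = ∑ z, (1 / I) * k0 y z := Finset.sum_congr rfl fun z _ => hjeq y z
        _ = (1 / I) * ∑ z, k0 y z := by rw [Finset.mul_sum]
        _ = 0 := by rw [div0 y hy hyB]; ring
    · calc ∑ z, j a z = ∑ z, (1 / I) * k0 a z := Finset.sum_congr rfl fun z _ => hjeq a z
        _ = (1 / I) * ∑ z, k0 a z := by rw [Finset.mul_sum]
        _ = 1 := by rw [← hIdef]; exact one_div_mul_cancel hIne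
  have hjsrc : ∑ z, j a z = 1 := hjflow.2.2.2
  have hjcons : ∀ y, y ≠ a → y ∉ B → ∑ z, j y z = 0 := hjflow.2.2.1
  -- cross term vanishes : i0 = j
  have hcross : ∑ y, ∑ z, (1 / Ct y z) * j y z * (i0 y z - j y z) = 0 := by
    have hpt : ∀ y z, (1 / Ct y z) * j y z * (i0 y z - j y z)
        = (1 / I) * ((vt y - vt z) * (i0 y z - j y z)) := by
      intro y z
      by_cases h : G.Adj y z
      · rw [hjeq y z, hk0adj y z h]
        have hne := (hpost y z h).ne'
        field_simp
        all_goals ring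
      · rw [hjeq y z, hk0n y z h, hi0supp y z h]; ring
    have hδsym : ∀ y z, i0 y z - j y z = -(i0 z y - j z y) := by
      intro y z
      rw [hi0sym y z, hjeq y z, hjeq z y, hk0sym y z]; ring
    calc ∑ y, ∑ z, (1 / Ct y z) * j y z * (i0 y z - j y z)
        = ∑ y, ∑ z, (1 / I) * ((vt y - vt z) * (i0 y z - j y z)) :=
          Finset.sum_congr rfl fun y _ => Finset.sum_congr rfl fun z _ => hpt y z
      _ = (1 / I) * ∑ y, ∑ z, (vt y - vt z) * (i0 y z - j y z) := sum2_smul _ _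
      _ = (1 / I) * (2 * ∑ y, vt y * ∑ z, (i0 y z - j y z)) := by
          rw [pairing _ hδsym vt]
      _ = 0 := by
          have : ∀ y, vt y * ∑ z, (i0 y z - j y z) = 0 := by
            intro y
            rw [Finset.sum_sub_distrib]
            by_cases hya : y = a
            · subst hya; rw [hi0src, hjsrc]; ring
            · by_cases hyB : y ∈ B
              · rw [hvtB y hyB]; ring
              · rw [hi0cons y hya hyB, hjcons y hya hyB]; ring
          rw [Finset.sum_eq_zero fun y _ => this y]
          ring
  have hi0eqj : ∀ y z, i0 y z = j y z := by
    have hfun : i0 = fun y z => j y z + 1 * (i0 y z - j y z) := by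
      funext y z; ring
    have hexp : energyF (fun y z => 1 / Ct y z) i0
        = energyF (fun y z => 1 / Ct y z) j
          + energyF (fun y z => 1 / Ct y z) (fun y z => i0 y z - j y z) := by
      calc energyF (fun y z => 1 / Ct y z) i0
          = energyF (fun y z => 1 / Ct y z) (fun y z => j y z + 1 * (i0 y z - j y z)) := by
            rw [← hfun]
        _ = _ := by
            rw [energy_expand (fun y z => 1 / Ct y z) j (fun y z => i0 y z - j y z) 1, hcross]
            ring
    have hle := hi0min j hjflow
    have hEδ : energyF (fun y z => 1 / Ct y z) (fun y z => i0 y z - j y z) ≤ 0 := by linarith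
    have hnn : ∀ y z, 0 ≤ (i0 y z - j y z) ^ 2 * (1 / Ct y z) := by
      intro y z
      by_cases h : G.Adj y z
      · exact mul_nonneg (sq_nonneg _) (one_div_pos.mpr (hpost y z h)).le
      · rw [hi0supp y z h, hjeq y z, hk0n y z h]; norm_num
    have hsum0 : ∑ y, ∑ z, (i0 y z - j y z) ^ 2 * (1 / Ct y z) = 0 := by
      have h1 : 0 ≤ ∑ y, ∑ z, (i0 y z - j y z) ^ 2 * (1 / Ct y z) :=
        Finset.sum_nonneg fun y _ => Finset.sum_nonneg fun z _ => hnn y z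
      have h2 : energyF (fun y z => 1 / Ct y z) (fun y z => i0 y z - j y z)
          = (1 / 2) * ∑ y, ∑ z, (i0 y z - j y z) ^ 2 * (1 / Ct y z) := rfl
      rw [h2] at hEδ
      linarith
    have houter := (Finset.sum_eq_zero_iff_of_nonneg (fun y _ =>
      Finset.sum_nonneg fun z _ => hnn y z)).mp hsum0
    intro y z
    by_cases h : G.Adj y z
    · have hinner := (Finset.sum_eq_zero_iff_of_nonneg (fun z _ => hnn y z)).mp
        (houter y (Finset.mem_univ y)) z (Finset.mem_univ z)
      have hne : (1 : ℝ) / Ct y z ≠ 0 := (one_div_pos.mpr (hpost y z h)).ne'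
      rcases mul_eq_zero.mp hinner with h' | h'
      · have := pow_eq_zero_iff (n := 2) (by norm_num) |>.mp h'
        linarith
      · exact absurd h' hne
    · rw [hi0supp y z h, hjeq y z, hk0n y z h]; ring
  -- the effective resistance is 1/I
  have hEval : energyF (fun y z => 1 / Ct y z) i0 = 1 / I := by
    have hfun : i0 = j := funext fun y => funext fun z => hi0eqj y z
    rw [hfun]
    have hpt : ∀ y z, (j y z) ^ 2 * (1 / Ct y z) = (1 / I ^ 2) * ((vt y - vt z) * k0 y z) := by
      intro y z
      by_cases h : G.Adj y z
      · rw [hjeq y z, hk0adj y z h]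
        have hne := (hpost y z h).ne'
        field_simp
        all_goals ring
      · rw [hjeq y z, hk0n y z h]; ring
    have : energyF (fun y z => 1 / Ct y z) j
        = (1 / 2) * ∑ y, ∑ z, (1 / I ^ 2) * ((vt y - vt z) * k0 y z) := by
      unfold energyF
      congr 1
      exact Finset.sum_congr rfl fun y _ => Finset.sum_congr rfl fun z _ => hpt y z
    rw [this, sum2_smul, h2I]
    field_simp
    all_goals ring
  -- the main resistance term
  have hT0 : ∑ y, ∑ z, (1 / Ct y z) * i1 y z * i0 y z = (2 / I) * (vt x - vt1 x) := by
    have hpt : ∀ y z, (1 / Ct y z) * i1 y z * i0 y z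
        = (1 / I) * ((vt y - vt z) * i1 y z) := by
      intro y z
      rw [hi0eqj y z]
      by_cases h : G.Adj y z
      · rw [hjeq y z, hk0adj y z h]
        have hne := (hpost y z h).ne'
        field_simp
        all_goals ring
      · rw [hi1supp y z h]; ring
    calc ∑ y, ∑ z, (1 / Ct y z) * i1 y z * i0 y z
        = ∑ y, ∑ z, (1 / I) * ((vt y - vt z) * i1 y z) :=
          Finset.sum_congr rfl fun y _ => Finset.sum_congr rfl fun z _ => hpt y z
      _ = (1 / I) * ∑ y, ∑ z, (vt y - vt z) * i1 y z := sum2_smul _ _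
      _ = (1 / I) * (2 * ∑ y, vt y * ∑ z, i1 y z) := by rw [pairing i1 hi1sym vt]
      _ = (1 / I) * (2 * (vt x + vt a * d)) := by rw [hd1sum vt hvtB]
      _ = (2 / I) * (vt x - vt1 x) := by
          rw [hvta]
          have hd : d = -vt1 x := by linarith
          rw [hd]; ring
  -- conclusion
  have hsplit : ∑ y, ∑ z, (1 / Ct y z - 1 / Ct1 y z) * i1 y z * i0 y z
      = (∑ y, ∑ z, (1 / Ct y z) * i1 y z * i0 y z)
        - ∑ y, ∑ z, (1 / Ct1 y z) * i1 y z * i0 y z := by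
    rw [← Finset.sum_sub_distrib]
    refine Finset.sum_congr rfl fun y _ => ?_
    rw [← Finset.sum_sub_distrib]
    exact Finset.sum_congr rfl fun z _ => by ring
  rw [hEval, hsplit, hT0, hstatB]
  field_simp
  ring

end
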